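/- arXiv:1402.3843 — 4 statements merged into one kernel-verified Lean document; each statement's English description precedes it below -/
import Mathlib

section
/- Every IP* subset of a group G intersects every IP set nontrivially, and the intersection of two IP* subsets of G is again IP*. -/
open Pointwise

/-- `FP φ` is the set of finite products `φ(i₁) ⋯ φ(i_k)` with `i₁ < ⋯ < i_k`. -/
def FP {G : Type*} [Group G] (φ : ℕ → G) : Set G :=
  {g | ∃ l : List ℕ, l ≠ [] ∧ l.Chain' (· < ·) ∧ (l.map φ).prod = g}

/-- A subset of `G` is an IP set if it contains `FP φ` for some sequence `φ`. -/
def IsIPSet {G : Type*} [Group G] (A : Set G) : Prop :=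
  ∃ φ : ℕ → G, FP φ ⊆ A

/-- A subset of `G` is IP* if it meets every IP set. -/
def IsIPStar {G : Type*} [Group G] (S : Set G) : Prop :=
  ∀ A : Set G, IsIPSet A → (S ∩ A).Nonempty

/-!
By Hindman's theorem, if `A` is an IP set and `A = (A ∩ S) ∪ (A \ S)`, one of the two pieces is
an IP set. When `S` is IP* the piece `A \ S` misses `S`, so `A ∩ S` is an IP set; a second IP*
set `S₂` then meets it, giving a point of `S ∩ S₂` in `A`.
-/

namespace Hindman

theorem FP_drop_subset_FP_drop {M : Type*} [Semigroup M] (a : Stream' M) {m n : ℕ}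
    (h : m ≤ n) : FP (a.drop n) ⊆ FP (a.drop m) := by
  obtain ⟨k, rfl⟩ := Nat.exists_eq_add_of_le h
  rw [← Stream'.drop_drop]
  exact FP_drop_subset_FP _ k

theorem prod_map_mem_FP_drop {M : Type*} [Monoid M] (a : Stream' M) :
    ∀ (i : ℕ) (l : List ℕ), (i :: l).IsChain (· < ·) →
      ((i :: l).map a.get).prod ∈ FP (a.drop i)
  | i, [], _ => by simpa [Stream'.head_drop] using FP.head (a.drop i)
  | i, j :: l, h => by
    obtain ⟨hij, hl⟩ := List.isChain_cons_cons.mp h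
    rw [List.map_cons, List.prod_cons, ← Stream'.head_drop]
    refine FP.cons _ _ ?_
    rw [Stream'.tail_drop']
    exact FP_drop_subset_FP_drop a hij (prod_map_mem_FP_drop a j l hl)

end Hindman

section FP

variable {G : Type*} [Group G]

theorem FP_subset_hindmanFP (φ : ℕ → G) : FP φ ⊆ Hindman.FP φ := by
  rintro _ ⟨_ | ⟨i, l⟩, hne, hl, rfl⟩
  · exact absurd rfl hne
  · exact Hindman.FP_drop_subset_FP _ i (Hindman.prod_map_mem_FP_drop φ i l hl)

theorem FP_succ_subset_FP (φ : ℕ → G) : FP (fun n => φ (n + 1)) ⊆ FP φ := by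
  rintro _ ⟨l, hne, hl, rfl⟩
  exact ⟨l.map (· + 1), by simpa using hne,
    List.isChain_map_of_isChain (· + 1) (fun _ _ => Nat.succ_lt_succ) hl,
    by simp [Function.comp_def]⟩

theorem mul_mem_FP_of_mem_FP_succ (φ : ℕ → G) {g : G} (hg : g ∈ FP (fun n => φ (n + 1))) :
    φ 0 * g ∈ FP φ := by
  obtain ⟨_ | ⟨j, l⟩, hne, hl, rfl⟩ := hg
  · exact absurd rfl hne
  refine ⟨0 :: (j :: l).map (· + 1), List.cons_ne_nil _ _, ?_, by simp [Function.comp_def]⟩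
  exact List.isChain_cons_cons.mpr ⟨Nat.succ_pos j,
    List.isChain_map_of_isChain (· + 1) (fun _ _ => Nat.succ_lt_succ) hl⟩

theorem hindmanFP_subset_FP (a : Stream' G) : Hindman.FP a ⊆ FP a := by
  intro g hg
  induction hg with
  | head' a => exact ⟨[0], List.cons_ne_nil _ _, List.isChain_singleton _, List.prod_singleton⟩
  | tail' a _ _ ih => exact FP_succ_subset_FP a ih
  | cons' a _ _ ih => exact mul_mem_FP_of_mem_FP_succ a ih

theorem FP_eq_hindmanFP (φ : ℕ → G) : FP φ = Hindman.FP φ :=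
  (FP_subset_hindmanFP φ).antisymm (hindmanFP_subset_FP φ)

end FP

section IPSet

variable {G : Type*} [Group G] {A B S : Set G}

theorem isIPSet_iff_exists_hindmanFP_subset :
    IsIPSet A ↔ ∃ a : Stream' G, Hindman.FP a ⊆ A :=
  exists_congr fun φ => by rw [FP_eq_hindmanFP]

theorem IsIPSet.mono (hA : IsIPSet A) (hAB : A ⊆ B) : IsIPSet B :=
  let ⟨φ, hφ⟩ := hA
  ⟨φ, hφ.trans hAB⟩

theorem isIPSet_union : IsIPSet (A ∪ B) ↔ IsIPSet A ∨ IsIPSet B := by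
  refine ⟨fun h => ?_, fun h => h.elim (·.mono Set.subset_union_left)
    (·.mono Set.subset_union_right)⟩
  obtain ⟨a, ha⟩ := isIPSet_iff_exists_hindmanFP_subset.mp h
  obtain ⟨C, hC, b, hb⟩ := Hindman.FP_partition_regular a {A, B} (Set.toFinite _)
    (by rwa [Set.sUnion_pair])
  rcases hC with rfl | rfl
  · exact .inl (isIPSet_iff_exists_hindmanFP_subset.mpr ⟨b, hb⟩)
  · exact .inr (isIPSet_iff_exists_hindmanFP_subset.mpr ⟨b, hb⟩)

theorem IsIPStar.isIPSet_inter (hS : IsIPStar S) (hA : IsIPSet A) : IsIPSet (A ∩ S) := by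
  rw [← Set.inter_union_sdiff A S, isIPSet_union] at hA
  refine hA.resolve_right fun hAS => ?_
  obtain ⟨x, hxS, -, hxnS⟩ := hS _ hAS
  exact hxnS hxS

end IPSet

/-- Every IP* set intersects every IP set nontrivially, and the intersection of two
IP* subsets of `G` is again IP*. -/
theorem ipStar_inter {G : Type*} [Group G] :
    (∀ S A : Set G, IsIPStar S → IsIPSet A → (S ∩ A).Nonempty) ∧
    (∀ S₁ S₂ : Set G, IsIPStar S₁ → IsIPStar S₂ → IsIPStar (S₁ ∩ S₂)) := by
  refine ⟨fun S A hS hA => hS A hA, fun S₁ S₂ hS₁ hS₂ A hA => ?_⟩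
  obtain ⟨x, hx₂, hxA, hx₁⟩ := hS₂ _ (hS₁.isIPSet_inter hA)
  exact ⟨x, ⟨hx₁, hx₂⟩, hxA⟩
end

section
/- If S ⊆ G is an IP* set, then finitely many left translates of S cover G; that is, there exist g₁,…,g_n ∈ G with G = g₁S ∪ ⋯ ∪ g_nS. -/
open Pointwise

section FiniteProducts

variable {G : Type*} [Group G] [DecidableEq G] (next : Finset G → G)

/-- The finite products, empty one included, of `φ 0, …, φ (n - 1)` for the sequence
`φ k = next (partialProducts next k)`. -/
def partialProducts : ℕ → Finset G
  | 0 => {1}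
  | n + 1 => partialProducts n ∪ (partialProducts n).image (· * next (partialProducts n))

def partialProductsSeq (n : ℕ) : G := next (partialProducts next n)

theorem partialProducts_mono : Monotone (partialProducts next) :=
  monotone_nat_of_le_succ fun _ => Finset.subset_union_left

theorem mul_partialProductsSeq_mem {n : ℕ} {p : G} (hp : p ∈ partialProducts next n) :
    p * partialProductsSeq next n ∈ partialProducts next (n + 1) :=
  Finset.mem_union_right _ (Finset.mem_image_of_mem _ hp)

theorem prod_map_partialProductsSeq_mem {l : List ℕ} (hl : l.Pairwise (· < ·)) {n : ℕ}
    (hn : ∀ i ∈ l, i < n) : (l.map (partialProductsSeq next)).prod ∈ partialProducts next n := by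
  induction l using List.reverseRecOn generalizing n with
  | nil => exact partialProducts_mono next (Nat.zero_le n) (Finset.mem_singleton_self 1)
  | append_singleton l m ih =>
    obtain ⟨hl, -, hlm⟩ := List.pairwise_append.mp hl
    have hprefix := ih hl fun i hi => hlm i hi m (List.mem_singleton_self m)
    rw [List.map_append, List.prod_append, List.map_singleton, List.prod_singleton]
    exact partialProducts_mono next (hn m (by simp)) (mul_partialProductsSeq_mem next hprefix)

theorem exists_mul_partialProductsSeq_eq_of_mem_FP {g : G} (hg : g ∈ FP (partialProductsSeq next)) :
    ∃ m, ∃ p ∈ partialProducts next m, p * partialProductsSeq next m = g := by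
  obtain ⟨l, hne, hchain, rfl⟩ := hg
  obtain ⟨l, m, rfl⟩ := List.eq_nil_or_concat' l |>.resolve_left hne
  obtain ⟨hl, -, hlm⟩ := List.pairwise_append.mp (List.isChain_iff_pairwise.mp hchain)
  refine ⟨m, _, prod_map_partialProductsSeq_mem next hl fun i hi => hlm i hi m (by simp), ?_⟩
  simp

end FiniteProducts

theorem isIPSet_of_forall_finset_exists_mul_mem {G : Type*} [Group G] {A : Set G}
    (h : ∀ F : Finset G, ∃ y, ∀ f ∈ F, f * y ∈ A) : IsIPSet A := by
  classical
  choose next hnext using h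
  refine ⟨partialProductsSeq next, fun g hg => ?_⟩
  obtain ⟨m, p, hp, rfl⟩ := exists_mul_partialProductsSeq_eq_of_mem_FP next hg
  exact hnext _ p hp

theorem exists_mul_mem_compl_of_forall_iUnion_smul_ne_univ {G : Type*} [Group G] {S : Set G}
    (h : ∀ t : Finset G, ⋃ g ∈ t, g • S ≠ Set.univ) (F : Finset G) :
    ∃ y, ∀ f ∈ F, f * y ∈ Sᶜ := by
  classical
  obtain ⟨y, hy⟩ := (Set.ne_univ_iff_exists_notMem _).mp (h F⁻¹)
  refine ⟨y, fun f hf hfy => hy (Set.mem_biUnion (Finset.inv_mem_inv hf) ?_)⟩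
  exact ⟨f * y, hfy, by simp [smul_eq_mul]⟩

/-- If `S` is IP*, then finitely many left translates of `S` cover `G`. -/
theorem ipStar_finitely_many_translates_cover {G : Type*} [Group G] (S : Set G)
    (hS : IsIPStar S) :
    ∃ t : Finset G, (⋃ g ∈ t, g • S) = Set.univ := by
  by_contra! hcover
  obtain ⟨g, hgS, hgSc⟩ :=
    hS Sᶜ (isIPSet_of_forall_finset_exists_mul_mem
      (exists_mul_mem_compl_of_forall_iUnion_smul_ne_univ hcover))
  exact hgSc hgS
end

section
/- Let G be a locally compact second countable group with left Haar measure m and left Følner sequence Φ. If a measurable subset R of G has positive lower density with respect to every left Følner sequence in G, then R is syndetic, i.e. there is a compact set F ⊆ G with FR = G. -/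
/-!
If `R` is not syndetic, then for every `N` some `h_N` lies outside the compact set `Φ_N⁻¹ R`,
i.e. `Φ_N h_N` misses `R`. Right translation multiplies Haar measure by the positive modular
factor `Δ(h_N⁻¹)` on both the numerator and the denominator of the Følner ratio, so `N ↦ Φ_N h_N`
is again a left Følner sequence, and `R` has density zero along it.
-/

open MeasureTheory Filter Topology Pointwise

/-- A left Følner sequence: a sequence of compact positive-measure subsets such that
`m(Φ_N △ gΦ_N)/m(Φ_N) → 0` for every `g ∈ G`. -/
def IsFolnerSeq {G : Type*} [Group G] [TopologicalSpace G] [MeasurableSpace G]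
    (m : Measure G) (Φ : ℕ → Set G) : Prop :=
  (∀ N, IsCompact (Φ N)) ∧ (∀ N, 0 < m (Φ N)) ∧
    ∀ g : G, Tendsto (fun N => (m (symmDiff (Φ N) (g • Φ N))).toReal / (m (Φ N)).toReal)
      atTop (𝓝 0)

/-- The lower density of a measurable set `E ⊆ G` with respect to a Følner sequence `Φ`. -/
noncomputable def lowerDensity {G : Type*} [Group G] [TopologicalSpace G] [MeasurableSpace G]
    (m : Measure G) (Φ : ℕ → Set G) (E : Set G) : ℝ :=
  liminf (fun N => (m (E ∩ Φ N)).toReal / (m (Φ N)).toReal) atTop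

section Group

variable {G : Type*} [Group G]

lemma symmDiff_mul_singleton (s t : Set G) (g : G) :
    symmDiff s t * {g} = symmDiff (s * {g}) (t * {g}) := by
  simp only [Set.mul_singleton]
  exact Set.image_symmDiff (mul_left_injective g) s t

lemma exists_disjoint_mul_singleton_of_inv_mul_ne_univ {K R : Set G} (h : K⁻¹ * R ≠ Set.univ) :
    ∃ g : G, Disjoint R (K * {g}) := by
  obtain ⟨g, hg⟩ := (Set.ne_univ_iff_exists_notMem _).1 h
  refine ⟨g, Set.disjoint_left.2 ?_⟩
  rw [Set.mul_singleton]
  rintro _ hx ⟨k, hk, rfl⟩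
  exact hg ⟨k⁻¹, Set.inv_mem_inv.2 hk, k * g, hx, by group⟩

end Group

section Haar

variable {G : Type*} [Group G] [TopologicalSpace G] [IsTopologicalGroup G] [LocallyCompactSpace G]
  [MeasurableSpace G] [BorelSpace G] (m : Measure G) [m.IsHaarMeasure]

/-- Without second countability Haar measures need not be regular, so the uniqueness of Haar
measure is only available on sets with compact closure. -/
lemma measure_mul_singleton_of_isCompact_closure {A : Set G} (hA : IsCompact (closure A)) (g : G) :
    m (A * {g}) = Measure.modularCharacterFun g⁻¹ * m A := by
  have hpreimage : A * {g} = MeasurableEquiv.mulRight g⁻¹ ⁻¹' A := by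
    rw [Set.mul_singleton, Set.image_mul_right]
    rfl
  rw [hpreimage, ← MeasurableEquiv.map_apply, MeasurableEquiv.coe_mulRight,
    Measure.modularCharacterFun_eq_haarScalarFactor m]
  exact Measure.measure_isMulInvariant_eq_smul_of_isCompact_closure _ m hA

lemma IsFolnerSeq.mul_singleton {Φ : ℕ → Set G} (hΦ : IsFolnerSeq m Φ) (h : ℕ → G) :
    IsFolnerSeq m (fun N => Φ N * {h N}) := by
  obtain ⟨hcpt, hpos, hfol⟩ := hΦ
  refine ⟨fun N => (hcpt N).mul isCompact_singleton, fun N => ?_, fun g => ?_⟩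
  · rw [measure_mul_singleton_of_isCompact_closure m (hcpt N).closure]
    exact ENNReal.mul_pos (by exact_mod_cast (Measure.modularCharacterFun_pos _).ne') (hpos N).ne'
  · refine (hfol g).congr fun N => ?_
    dsimp only
    symm
    have hunion : IsCompact (Φ N ∪ g • Φ N) := (hcpt N).union ((hcpt N).smul g)
    rw [← smul_mul_assoc, ← symmDiff_mul_singleton,
      measure_mul_singleton_of_isCompact_closure m (hunion.closure_of_subset symmDiff_le_sup),
      measure_mul_singleton_of_isCompact_closure m (hcpt N).closure,
      ENNReal.toReal_mul, ENNReal.toReal_mul, mul_div_mul_left]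
    simpa using (Measure.modularCharacterFun_pos (h N)⁻¹).ne'

end Haar

lemma lowerDensity_eq_zero_of_disjoint {G : Type*} [Group G] [TopologicalSpace G]
    [MeasurableSpace G] (m : Measure G) {Φ : ℕ → Set G} {E : Set G}
    (h : ∀ N, Disjoint E (Φ N)) : lowerDensity m Φ E = 0 := by
  simp [lowerDensity, Set.disjoint_iff_inter_eq_empty.1 (h _)]

theorem syndetic_of_positive_lowerDensity_general {G : Type*} [Group G] [TopologicalSpace G]
    [IsTopologicalGroup G] [LocallyCompactSpace G]
    [MeasurableSpace G] [BorelSpace G] (m : Measure G) [m.IsHaarMeasure]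
    (Φ : ℕ → Set G) (hΦ : IsFolnerSeq m Φ)
    (R : Set G)
    (hpos : ∀ Ψ : ℕ → Set G, IsFolnerSeq m Ψ → 0 < lowerDensity m Ψ R) :
    ∃ F : Set G, IsCompact F ∧ F * R = Set.univ := by
  by_contra! hsyndetic
  choose h hdisj using fun N =>
    exists_disjoint_mul_singleton_of_inv_mul_ne_univ (hsyndetic _ (hΦ.1 N).inv)
  have hdensity := hpos _ (hΦ.mul_singleton m h)
  rw [lowerDensity_eq_zero_of_disjoint m hdisj] at hdensity
  exact hdensity.false

/-- If a measurable subset `R` of `G` has positive lower density with respect to every left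
Følner sequence, then `R` is syndetic: there is a compact set `F` with `F * R = G`. -/
theorem syndetic_of_positive_lowerDensity {G : Type*} [Group G] [TopologicalSpace G]
    [IsTopologicalGroup G] [LocallyCompactSpace G] [SecondCountableTopology G]
    [MeasurableSpace G] [BorelSpace G] (m : Measure G) [m.IsHaarMeasure]
    (Φ : ℕ → Set G) (hΦ : IsFolnerSeq m Φ)
    (R : Set G) (hR : MeasurableSet R)
    (hpos : ∀ Ψ : ℕ → Set G, IsFolnerSeq m Ψ → 0 < lowerDensity m Ψ R) :
    ∃ F : Set G, IsCompact F ∧ F * R = Set.univ :=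
  syndetic_of_positive_lowerDensity_general m Φ hΦ R hpos
end

section
/- If S₁ and S₂ are commuting measure-preserving actions of G on a probability space (X, ℬ, μ) and S₂ is ergodic, then Eig(S₂) ⊆ Eig(S₂S₁), where S₂S₁ denotes the action g ↦ S₂^g S₁^g. -/
/-!
An eigenfunction `F` of `S₂` lies in a finite-dimensional `S₂`-invariant subspace `V ⊆ L²`.
Since the actions commute, each Koopman operator of `S₁`, restricted to `V`, is a linear map
`V → L²` intertwining the action of `S₂` on `V` with its Koopman representation. Ergodicity
bounds the dimension of the space of all such intertwiners by `dim V`: an intertwiner `T` is given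
pointwise by a kernel `τ : X → V` with `T v = ⟪τ, v⟫` a.e., the Gram matrix of finitely many
kernels is `S₂`-invariant and therefore a.e. constant, so a linear relation among the kernels at
one point holds almost everywhere. Hence the sum `W` of the ranges of all intertwiners is
finite-dimensional; it contains `V` and is invariant under `S₁` and `S₂`, so `F` is an
eigenfunction of `S₂S₁`. Ergodicity is only assumed for strictly invariant sets; it extends to
a.e. invariant ones by averaging over Haar measure on `G`.
-/

open MeasureTheory Filter Topology Pointwise

/-- A measurable, measure-preserving action of `G` on `(X, μ)`. -/
def IsMeasurableAction {G X : Type*} [Group G] [MeasurableSpace G] [MeasurableSpace X]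
    (T : G → X → X) (μ : Measure X) : Prop :=
  Measurable (fun p : G × X => T p.1 p.2) ∧ (∀ x, T 1 x = x) ∧
    (∀ g h x, T g (T h x) = T (g * h) x) ∧ ∀ g, MeasurePreserving (T g) μ μ

/-- An action is ergodic if every invariant measurable set is null or conull. -/
def IsErgodicAction {G X : Type*} [MeasurableSpace X] (T : G → X → X) (μ : Measure X) :
    Prop :=
  ∀ s : Set X, MeasurableSet s → (∀ g, T g ⁻¹' s = s) → μ s = 0 ∨ μ s = 1

/-- `F ∈ L²(μ)` is an eigenfunction of the action `T` if its orbit is contained in a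
finite-dimensional `T`-invariant subspace of `L²`. -/
def IsEigenfunction {G X : Type*} [MeasurableSpace X] {μ : Measure X}
    (T : G → X → X) (F : Lp ℝ 2 μ) : Prop :=
  ∃ V : Submodule ℝ (Lp ℝ 2 μ), FiniteDimensional ℝ ↥V ∧
    (∀ g : G, ∀ h : Lp ℝ 2 μ, h ∈ V → ∀ h' : Lp ℝ 2 μ,
      (h' : X → ℝ) =ᵐ[μ] (fun x => h (T g x)) → h' ∈ V) ∧
    F ∈ V

/-- `Eig(T)`: the closed subspace of `L²(μ)` spanned by the eigenfunctions of `T`. -/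
noncomputable def eigSpace {G X : Type*} [MeasurableSpace X] (μ : Measure X)
    (T : G → X → X) : Set (Lp ℝ 2 μ) :=
  closure (Submodule.span ℝ {F : Lp ℝ 2 μ | IsEigenfunction T F} : Set (Lp ℝ 2 μ))

open RealInnerProductSpace

section Intertwiners

variable {R G M N : Type*} [CommSemiring R] [AddCommMonoid M] [Module R M] [AddCommMonoid N]
  [Module R N]

def intertwiners (U : G → M →ₗ[R] M) (K : G → N →ₗ[R] N) : Submodule R (M →ₗ[R] N) where
  carrier := {T | ∀ g, T ∘ₗ U g = K g ∘ₗ T}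
  add_mem' {T T'} hT hT' g := by simp only [LinearMap.add_comp, LinearMap.comp_add, hT g, hT' g]
  zero_mem' g := by simp
  smul_mem' c T hT g := by simp only [LinearMap.smul_comp, LinearMap.comp_smul, hT g]

variable {U : G → M →ₗ[R] M} {K : G → N →ₗ[R] N}

theorem mem_intertwiners {T : M →ₗ[R] N} : T ∈ intertwiners U K ↔ ∀ g v, T (U g v) = K g (T v) :=
  forall_congr' fun _ => LinearMap.ext_iff

variable (U K) in
def intertwinerRange : Submodule R N :=
  ⨆ T : intertwiners U K, LinearMap.range (T : M →ₗ[R] N)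

theorem range_le_intertwinerRange {T : M →ₗ[R] N} (hT : T ∈ intertwiners U K) :
    LinearMap.range T ≤ intertwinerRange U K :=
  le_iSup_of_le (⟨T, hT⟩ : intertwiners U K) le_rfl

theorem intertwinerRange_le_comap (g : G) :
    intertwinerRange U K ≤ (intertwinerRange U K).comap (K g) :=
  iSup_le fun T => by
    rintro _ ⟨v, rfl⟩
    rw [Submodule.mem_comap, ← mem_intertwiners.1 T.2]
    exact range_le_intertwinerRange T.2 ⟨U g v, rfl⟩

theorem intertwinerRange_le_comap_of_commute {L : N →ₗ[R] N} (hL : ∀ g, Commute L (K g)) :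
    intertwinerRange U K ≤ (intertwinerRange U K).comap L :=
  iSup_le fun T => by
    rintro _ ⟨v, rfl⟩
    refine range_le_intertwinerRange (T := L ∘ₗ T) (fun g => ?_) ⟨v, rfl⟩
    rw [LinearMap.comp_assoc, T.2 g, ← LinearMap.comp_assoc, ← Module.End.mul_eq_comp,
      (hL g).eq]
    rfl

end Intertwiners

instance finiteDimensional_intertwinerRange {𝕜 G M N : Type*} [Field 𝕜] [AddCommGroup M]
    [Module 𝕜 M] [AddCommGroup N] [Module 𝕜 N] {U : G → M →ₗ[𝕜] M} {K : G → N →ₗ[𝕜] N}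
    [FiniteDimensional 𝕜 M] [FiniteDimensional 𝕜 (intertwiners U K)] :
    FiniteDimensional 𝕜 (intertwinerRange U K) := by
  let b := Module.finBasis 𝕜 M
  refine Submodule.finiteDimensional_of_le (iSup_le fun T => ?_ :
    intertwinerRange U K ≤ ⨆ i, (intertwiners U K).map (LinearMap.applyₗ (b i)))
  rintro _ ⟨v, rfl⟩
  rw [← b.sum_repr v, map_sum]
  refine Submodule.sum_mem _ fun i _ => ?_
  rw [map_smul]
  exact Submodule.smul_mem _ _ (Submodule.mem_iSup_of_mem i ⟨T, T.2, rfl⟩)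

theorem MeasureTheory.Lp.coeFn_finset_sum_smul {α E 𝕜 ι : Type*} [MeasurableSpace α]
    {μ : Measure α} {p : ENNReal} [NormedAddCommGroup E] [NormedRing 𝕜] [Module 𝕜 E]
    [IsBoundedSMul 𝕜 E] (s : Finset ι) (c : ι → 𝕜) (f : ι → Lp E p μ) :
    ⇑(∑ i ∈ s, c i • f i) =ᵐ[μ] fun x => ∑ i ∈ s, c i • f i x := by
  classical
  induction s using Finset.induction_on with
  | empty => exact Lp.coeFn_zero E p μ
  | insert a s ha ih =>
    simp only [Finset.sum_insert ha]
    filter_upwards [Lp.coeFn_add (c a • f a) (∑ i ∈ s, c i • f i), Lp.coeFn_smul (c a) (f a), ih]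
      with x h₁ h₂ h₃
    rw [h₁, Pi.add_apply, h₂, h₃, Pi.smul_apply]

section Koopman

variable {X : Type*} [MeasurableSpace X] {μ : Measure X}

abbrev koopman {T : X → X} (hT : MeasurePreserving T μ μ) : Lp ℝ 2 μ →ₗᵢ[ℝ] Lp ℝ 2 μ :=
  Lp.compMeasurePreservingₗᵢ ℝ T hT

theorem coeFn_koopman {T : X → X} (hT : MeasurePreserving T μ μ) (f : Lp ℝ 2 μ) :
    ⇑(koopman hT f) =ᵐ[μ] f ∘ T :=
  Lp.coeFn_compMeasurePreserving f hT

theorem koopman_koopman {T₁ T₂ : X → X} (h₁ : MeasurePreserving T₁ μ μ)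
    (h₂ : MeasurePreserving T₂ μ μ) (f : Lp ℝ 2 μ) :
    koopman h₁ (koopman h₂ f) = koopman (h₂.comp h₁) f :=
  (Lp.compMeasurePreserving_comp_apply f h₂ h₁).symm

theorem commute_koopman {T₁ T₂ : X → X} (h₁ : MeasurePreserving T₁ μ μ)
    (h₂ : MeasurePreserving T₂ μ μ) (h : T₁ ∘ T₂ = T₂ ∘ T₁) :
    Commute (koopman h₁).toLinearMap (koopman h₂).toLinearMap := by
  refine LinearMap.ext fun f => ?_
  change koopman h₁ (koopman h₂ f) = koopman h₂ (koopman h₁ f)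
  rw [koopman_koopman, koopman_koopman]
  congr 2
  exact h.symm

end Koopman

section PointwiseKernel

variable {X ι V : Type*} [MeasurableSpace X] {μ : Measure X} [Fintype ι]
  [NormedAddCommGroup V] [InnerProductSpace ℝ V] (b : OrthonormalBasis ι ℝ V)
  (T : V →ₗ[ℝ] Lp ℝ 2 μ)

noncomputable def pointwiseKernel (x : X) : V :=
  ∑ i, T (b i) x • b i

theorem inner_basis_pointwiseKernel (i : ι) (x : X) :
    ⟪b i, pointwiseKernel b T x⟫ = T (b i) x := by
  simp [pointwiseKernel, b.orthonormal.inner_right_fintype]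

theorem coeFn_ae_eq_inner_pointwiseKernel (v : V) :
    ⇑(T v) =ᵐ[μ] fun x => ⟪pointwiseKernel b T x, v⟫ := by
  conv_lhs => rw [← b.sum_repr' v, map_sum]
  simp only [map_smul]
  filter_upwards [Lp.coeFn_finset_sum_smul Finset.univ (fun i => ⟪b i, v⟫) (fun i => T (b i))]
    with x hx
  simp only [hx, pointwiseKernel, sum_inner, smul_eq_mul, real_inner_smul_left, mul_comm]

theorem stronglyMeasurable_pointwiseKernel : StronglyMeasurable (pointwiseKernel b T) :=
  Finset.stronglyMeasurable_fun_sum _ fun _ _ => (Lp.stronglyMeasurable _).smul_const _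

theorem pointwiseKernel_comp_ae_eq {G : Type*} {S : G → X → X}
    (hS : ∀ g, MeasurePreserving (S g) μ μ) {U : G → V ≃ₗᵢ[ℝ] V}
    (hT : ∀ g v, T (U g v) = koopman (hS g) (T v)) (g : G) :
    ∀ᵐ x ∂μ, pointwiseKernel b T (S g x) = (U g).symm (pointwiseKernel b T x) := by
  have hcoord : ∀ i, ∀ᵐ x ∂μ, T (b i) (S g x) = ⟪pointwiseKernel b T x, U g (b i)⟫ := fun i => by
    filter_upwards [coeFn_koopman (hS g) (T (b i)),
      coeFn_ae_eq_inner_pointwiseKernel b T (U g (b i))] with x hK hU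
    rw [← Function.comp_apply (f := ⇑(T (b i))), ← hK, ← hT, hU]
  filter_upwards [ae_all_iff.2 hcoord] with x hx
  refine InnerProductSpace.ext_inner_left_basis b.toBasis fun i => ?_
  rw [OrthonormalBasis.coe_toBasis, inner_basis_pointwiseKernel, hx i, ← real_inner_comm (b i),
    LinearIsometryEquiv.inner_map_eq_flip, LinearIsometryEquiv.symm_symm]

end PointwiseKernel

section ErgodicAction

variable {G X : Type*} [Group G] [TopologicalSpace G] [IsTopologicalGroup G]
  [LocallyCompactSpace G] [SecondCountableTopology G] [MeasurableSpace G] [BorelSpace G]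
  [MeasurableSpace X] {μ : Measure X} [IsProbabilityMeasure μ] {S : G → X → X}

theorem IsErgodicAction.ae_mem_or_ae_notMem (hS : IsMeasurableAction S μ)
    (herg : IsErgodicAction S μ) {A : Set X} (hA : MeasurableSet A)
    (hinv : ∀ g, S g ⁻¹' A =ᵐ[μ] A) : (∀ᵐ x ∂μ, x ∈ A) ∨ ∀ᵐ x ∂μ, x ∉ A := by
  let ν : Measure G := Measure.haar
  have hmeas : MeasurableSet {p : X × G | S p.2 p.1 ∈ A} :=
    hS.1.comp measurable_swap hA
  -- Right translations preserve Haar-null sets, so `B` is strictly invariant;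
  -- Fubini gives `B =ᵐ A`.
  let B : Set X := {x | ∀ᵐ g ∂ν, S g x ∈ A}
  have hB : MeasurableSet B := by
    simp only [B, ae_iff]
    exact measurable_measure_prodMk_left hmeas.compl (measurableSet_singleton 0)
  have hBinv : ∀ h, S h ⁻¹' B = B := by
    intro h
    ext x
    show (∀ᵐ g ∂ν, S g (S h x) ∈ A) ↔ ∀ᵐ g ∂ν, S g x ∈ A
    simp only [ae_iff, hS.2.2.1]
    exact measure_mul_right_null ν h (s := {g | S g x ∉ A})
  have hAB : ∀ᵐ x ∂μ, x ∈ B ↔ x ∈ A := by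
    have : ∀ᵐ x ∂μ, ∀ᵐ g ∂ν, S g x ∈ A ↔ x ∈ A :=
      (Measure.ae_ae_comm (hmeas.iff (measurable_fst hA))).2 (ae_of_all _ fun g => (hinv g).mem_iff)
    filter_upwards [this] with x hx
    exact (eventually_congr hx).trans eventually_const
  refine (herg B hB hBinv).symm.imp (fun h => ?_) (fun h => ?_)
  · have hB1 : ∀ᵐ x ∂μ, x ∈ B := by rwa [ae_mem_iff_measure_eq hB.nullMeasurableSet, measure_univ]
    filter_upwards [hAB, hB1] with x hx hxB using hx.1 hxB
  · filter_upwards [hAB, measure_eq_zero_iff_ae_notMem.1 h] with x hx hxB using mt hx.2 hxB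

theorem IsErgodicAction.exists_ae_eq_const {Y : Type*} [MeasurableSpace Y]
    [MeasurableSpace.CountablySeparated Y] [Nonempty Y] (hS : IsMeasurableAction S μ)
    (herg : IsErgodicAction S μ) {φ : X → Y} (hφ : Measurable φ)
    (hinv : ∀ g, φ ∘ S g =ᵐ[μ] φ) : ∃ c, φ =ᵐ[μ] Function.const X c :=
  exists_eventuallyEq_const_of_forall_separating MeasurableSet fun _ hU =>
    herg.ae_mem_or_ae_notMem hS (hφ hU) fun g => (hinv g).preimage _

theorem IsErgodicAction.card_le_finrank_of_linearIndependent (hS : IsMeasurableAction S μ)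
    (herg : IsErgodicAction S μ) {V : Type*} [NormedAddCommGroup V] [InnerProductSpace ℝ V]
    [FiniteDimensional ℝ V] {U : G → V ≃ₗᵢ[ℝ] V} {κ : Type*} [Fintype κ]
    {T : κ → V →ₗ[ℝ] Lp ℝ 2 μ} (hT : ∀ k g v, T k (U g v) = koopman (hS.2.2.2 g) (T k v))
    (hli : LinearIndependent ℝ T) : Fintype.card κ ≤ Module.finrank ℝ V := by
  let b := stdOrthonormalBasis ℝ V
  let τ : κ → X → V := fun k => pointwiseKernel b (T k)
  have hconst : ∀ j k, ∃ c : ℝ, (fun x => ⟪τ j x, τ k x⟫) =ᵐ[μ] Function.const X c := by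
    refine fun j k => herg.exists_ae_eq_const hS
      ((stronglyMeasurable_pointwiseKernel b _).inner
        (stronglyMeasurable_pointwiseKernel b _)).measurable fun g => ?_
    filter_upwards [pointwiseKernel_comp_ae_eq b (T j) hS.2.2.2 (hT j) g,
      pointwiseKernel_comp_ae_eq b (T k) hS.2.2.2 (hT k) g] with x hj hk
    simp only [Function.comp_apply, τ, hj, hk, LinearIsometryEquiv.inner_map_map]
  choose C hC using hconst
  have hgram : ∀ᵐ x ∂μ, Matrix.gram ℝ (fun k => τ k x) = Matrix.of C := by
    filter_upwards [ae_all_iff.2 fun j => ae_all_iff.2 (hC j)] with x hx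
    exact Matrix.ext hx
  obtain ⟨x₀, hx₀⟩ := hgram.exists
  suffices LinearIndependent ℝ fun k => τ k x₀ from this.fintype_card_le_finrank
  refine Fintype.linearIndependent_iff.2 fun a ha => ?_
  -- `‖∑ k, a k • τ k x‖² = aᵀ (gram x) a`, and `gram x = gram x₀` for a.e. `x`.
  have hrel : ∀ᵐ x ∂μ, ∑ k, a k • τ k x = 0 := by
    filter_upwards [hgram] with x hx
    rw [← inner_self_eq_zero (𝕜 := ℝ), ← star_trivial a, ← Matrix.star_dotProduct_gram_mulVec,
      hx, ← hx₀, Matrix.star_dotProduct_gram_mulVec]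
    simp only [Pi.star_apply, star_trivial, ha, inner_zero_left]
  have hsum : ∑ k, a k • T k = 0 := by
    refine b.toBasis.ext fun i => Lp.ext ?_
    simp only [OrthonormalBasis.coe_toBasis, LinearMap.sum_apply, LinearMap.smul_apply,
      LinearMap.zero_apply]
    filter_upwards [Lp.coeFn_finset_sum_smul Finset.univ a fun k => T k (b i), hrel,
      Lp.coeFn_zero ℝ 2 μ] with x hx hrel_x h0
    rw [hx, h0]
    simpa [τ, inner_sum, real_inner_smul_right, inner_basis_pointwiseKernel] using
      congrArg (⟪b i, ·⟫) hrel_x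
  exact Fintype.linearIndependent_iff.1 hli a hsum

theorem IsErgodicAction.finiteDimensional_intertwiners (hS : IsMeasurableAction S μ)
    (herg : IsErgodicAction S μ) {V : Type*} [NormedAddCommGroup V] [InnerProductSpace ℝ V]
    [FiniteDimensional ℝ V] (U : G → V ≃ₗᵢ[ℝ] V) :
    FiniteDimensional ℝ (intertwiners (fun g => (U g : V →ₗ[ℝ] V))
      fun g => (koopman (hS.2.2.2 g)).toLinearMap) := by
  refine Module.rank_lt_aleph0_iff.1 ((rank_le (n := Module.finrank ℝ V) fun s hs => ?_).trans_lt
    Cardinal.natCast_lt_aleph0)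
  set II := intertwiners (fun g => (U g : V →ₗ[ℝ] V)) fun g => (koopman (hS.2.2.2 g)).toLinearMap
  have hli := hs.map' II.subtype II.ker_subtype
  rw [← Fintype.card_coe]
  exact herg.card_le_finrank_of_linearIndependent hS (fun k => mem_intertwiners.1 k.1.2) hli

theorem IsEigenfunction.comp_of_commute {S₁ S₂ : G → X → X}
    (h₁ : ∀ g, MeasurePreserving (S₁ g) μ μ) (h₂ : IsMeasurableAction S₂ μ)
    (hcomm : ∀ g h x, S₁ g (S₂ h x) = S₂ h (S₁ g x)) (herg : IsErgodicAction S₂ μ)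
    {F : Lp ℝ 2 μ} (hF : IsEigenfunction S₂ F) :
    IsEigenfunction (fun g x => S₂ g (S₁ g x)) F := by
  obtain ⟨V, hVfin, hVinv, hFV⟩ := hF
  have hKV : ∀ g, ∀ f ∈ V, koopman (h₂.2.2.2 g) f ∈ V := fun g f hf =>
    hVinv g f hf _ (coeFn_koopman _ f)
  let U : G → V ≃ₗᵢ[ℝ] V := fun g => LinearIsometry.toLinearIsometryEquiv
    { toLinearMap := (koopman (h₂.2.2.2 g)).toLinearMap.restrict (hKV g)
      norm_map' := fun f => (koopman _).norm_map (f : Lp ℝ 2 μ) } rfl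
  have := herg.finiteDimensional_intertwiners h₂ U
  let W := intertwinerRange (fun g => (U g : V →ₗ[ℝ] V)) fun g => (koopman (h₂.2.2.2 g)).toLinearMap
  have hVW : V ≤ W := by
    simpa using range_le_intertwinerRange (T := V.subtype) (fun g => rfl)
  refine ⟨W, inferInstance, fun g f hf f' hf' => ?_, hVW hFV⟩
  have : f' = koopman (h₁ g) (koopman (h₂.2.2.2 g) f) := by
    rw [koopman_koopman]
    exact Lp.ext (hf'.trans (coeFn_koopman _ f).symm)
  rw [this]
  exact intertwinerRange_le_comap_of_commute
    (fun k => commute_koopman (h₁ g) (h₂.2.2.2 k) (funext fun x => hcomm g k x))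
    (intertwinerRange_le_comap g hf)

end ErgodicAction

/-- If `S₁` and `S₂` are commuting measure-preserving actions and `S₂` is ergodic, then
`Eig(S₂) ⊆ Eig(S₂S₁)`, where `S₂S₁` is the action `g ↦ S₂^g S₁^g`. -/
theorem eig_subset_of_product_ergodic {G X : Type*} [Group G] [TopologicalSpace G]
    [IsTopologicalGroup G] [LocallyCompactSpace G] [SecondCountableTopology G]
    [MeasurableSpace G] [BorelSpace G]
    [MeasurableSpace X] (μ : Measure X) [IsProbabilityMeasure μ]
    (S₁ S₂ : G → X → X)
    (h₁ : IsMeasurableAction S₁ μ) (h₂ : IsMeasurableAction S₂ μ)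
    (hcomm : ∀ g h x, S₁ g (S₂ h x) = S₂ h (S₁ g x))
    (herg : IsErgodicAction S₂ μ) :
    eigSpace μ S₂ ⊆ eigSpace μ (fun g x => S₂ g (S₁ g x)) :=
  closure_mono <| Submodule.span_mono fun _ hF =>
    hF.comp_of_commute h₁.2.2.2 h₂ hcomm herg
end
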